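/- arXiv:2503.01712 — 5 statements merged into one kernel-verified Lean document; each statement's English description precedes it below -/
import Mathlib

section
/- Instability of the explicit Euler scheme under the CFL-type condition: if Δt · c_n > 2, then the explicit Euler scheme for the l-photon loss Lindbladian is unstable; concretely, for the density matrix ρ₀ = e_n e_nᴴ (the matrix with a single 1 in entry (n,n)), the iterates E^p(ρ₀) are unbounded: the (n,n) entry of E^p(ρ₀) equals (1 − Δt·c_n)^p, so its absolute value tends to +∞ as p → ∞. -/
open Matrix Filter

/-- The truncated annihilation matrix on `ℂ^{n+1}`: `a e_k = √k e_{k-1}`. -/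
noncomputable def ann (n : ℕ) : Matrix (Fin (n+1)) (Fin (n+1)) ℂ :=
  Matrix.of fun i j => if (i : ℕ) + 1 = (j : ℕ) then ((Real.sqrt (j : ℕ) : ℝ) : ℂ) else 0

/-- The descending factorial `c_k = k(k-1)⋯(k-l+1)` as a real number. -/
noncomputable def cfac (l k : ℕ) : ℝ := (Nat.descFactorial k l : ℝ)

/-- The explicit Euler scheme for the `l`-photon loss Lindbladian,
`E(ρ) = ρ + Δt (L ρ Lᴴ − ½(LᴴL ρ + ρ LᴴL))` with `L = a^l`. -/
noncomputable def euler (n l : ℕ) (Δt : ℝ)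
    (ρ : Matrix (Fin (n+1)) (Fin (n+1)) ℂ) : Matrix (Fin (n+1)) (Fin (n+1)) ℂ :=
  ρ + (Δt : ℂ) • ((ann n ^ l) * ρ * (ann n ^ l)ᴴ
      - (2⁻¹ : ℂ) • ((ann n ^ l)ᴴ * (ann n ^ l) * ρ + ρ * ((ann n ^ l)ᴴ * (ann n ^ l))))

/-! Since `L = a^l` strictly lowers the index, the gain term `L ρ Lᴴ` vanishes in the last row,
while `LᴴL = diag(c_k)`. Hence `E` multiplies the `(n,n)` entry by `1 - Δt c_n`, a real number
of modulus greater than `1` once `Δt c_n > 2`. -/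

lemma Fin.sum_ite_val_eq {M : Type*} [AddCommMonoid M] {n : ℕ} (c : ℕ) (f : Fin n → M) :
    ∑ k : Fin n, (if (k : ℕ) = c then f k else 0) = if h : c < n then f ⟨c, h⟩ else 0 := by
  split_ifs with h
  · have hk (k : Fin n) : (k : ℕ) = c ↔ k = ⟨c, h⟩ := by rw [Fin.ext_iff]
    simp only [hk, Finset.sum_ite_eq', Finset.mem_univ, if_true]
  · exact Finset.sum_eq_zero fun k _ => if_neg (by omega)

lemma ann_apply (n : ℕ) (i j : Fin (n+1)) :
    ann n i j = if (i : ℕ) + 1 = j then ((Real.sqrt j : ℝ) : ℂ) else 0 := rfl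

lemma ann_pow_apply (n l : ℕ) (i j : Fin (n+1)) :
    (ann n ^ l) i j =
      if (i : ℕ) + l = j then ((Real.sqrt (Nat.descFactorial j l) : ℝ) : ℂ) else 0 := by
  induction l generalizing j with
  | zero => simp [Matrix.one_apply, Fin.ext_iff]
  | succ m ih =>
    simp only [pow_succ, Matrix.mul_apply, ih, ann_apply, ite_mul, zero_mul, @eq_comm _ (_ + m),
      Fin.sum_ite_val_eq]
    split_ifs <;> try first | omega | rfl | simp only [mul_zero]
    rw [show (j : ℕ) = i + m + 1 by omega, Nat.succ_descFactorial_succ, Nat.cast_mul,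
      Real.sqrt_mul (by positivity), Complex.ofReal_mul, mul_comm]

lemma conjTranspose_ann_pow_mul_ann_pow (n l : ℕ) :
    (ann n ^ l)ᴴ * ann n ^ l = diagonal fun k : Fin (n+1) => ((cfac l k : ℝ) : ℂ) := by
  ext i j
  rw [mul_apply, diagonal_apply]
  simp only [conjTranspose_apply, ann_pow_apply]
  by_cases hij : i = j
  · subst hij
    rw [if_pos rfl]
    rcases le_or_gt l i with hli | hli
    · rw [Fintype.sum_eq_single ⟨i - l, by omega⟩ fun k hk => by
        rw [if_neg fun h => hk (Fin.ext (by simp; omega)), star_zero, zero_mul]]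
      simp only [Nat.sub_add_cancel hli, if_true, Complex.star_def,
        Complex.conj_ofReal, ← Complex.ofReal_mul, Real.mul_self_sqrt (Nat.cast_nonneg _), cfac]
    · simp [cfac, Nat.descFactorial_eq_zero_iff_lt.mpr hli]
  · rw [if_neg hij]
    refine Finset.sum_eq_zero fun k _ => ?_
    split_ifs with hki hkj
    · exact absurd (Fin.ext (by omega)) hij
    all_goals simp

lemma ann_pow_last_apply {n l : ℕ} (hl : 1 ≤ l) (k : Fin (n+1)) :
    (ann n ^ l) (Fin.last n) k = 0 := by
  rw [ann_pow_apply, if_neg (by simp only [Fin.val_last]; omega)]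

lemma euler_apply_last_last {n l : ℕ} (hl : 1 ≤ l) (Δt : ℝ)
    (ρ : Matrix (Fin (n+1)) (Fin (n+1)) ℂ) :
    euler n l Δt ρ (Fin.last n) (Fin.last n)
      = ((1 - Δt * cfac l n : ℝ) : ℂ) * ρ (Fin.last n) (Fin.last n) := by
  have hgain : (ann n ^ l * ρ * (ann n ^ l)ᴴ) (Fin.last n) (Fin.last n) = 0 := by
    simp [mul_apply, ann_pow_last_apply hl]
  simp only [euler, Matrix.add_apply, Matrix.smul_apply, Matrix.sub_apply, hgain,
    conjTranspose_ann_pow_mul_ann_pow, diagonal_mul, mul_diagonal, Fin.val_last, smul_eq_mul]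
  push_cast
  ring

lemma iterate_euler_apply_last_last {n l : ℕ} (hl : 1 ≤ l) (Δt : ℝ)
    (ρ : Matrix (Fin (n+1)) (Fin (n+1)) ℂ) (p : ℕ) :
    ((euler n l Δt)^[p] ρ) (Fin.last n) (Fin.last n)
      = ((1 - Δt * cfac l n : ℝ) : ℂ) ^ p * ρ (Fin.last n) (Fin.last n) := by
  induction p with
  | zero => simp
  | succ p ih =>
    rw [Function.iterate_succ_apply', euler_apply_last_last hl, ih, pow_succ, mul_assoc,
      mul_left_comm]

theorem stmt0_general (l n : ℕ) (hl : 1 ≤ l) (Δt : ℝ)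
    (hCFL : 2 < Δt * cfac l n)
    (ρ₀ : Matrix (Fin (n+1)) (Fin (n+1)) ℂ)
    (hρ₀ : ρ₀ = Matrix.single (Fin.last n) (Fin.last n) 1) :
    (∀ p : ℕ, ((euler n l Δt)^[p] ρ₀) (Fin.last n) (Fin.last n)
        = (((1 - Δt * cfac l n : ℝ) : ℂ)) ^ p)
    ∧ Tendsto (fun p : ℕ =>
        ‖((euler n l Δt)^[p] ρ₀) (Fin.last n) (Fin.last n)‖) atTop atTop := by
  have hiter (p : ℕ) : ((euler n l Δt)^[p] ρ₀) (Fin.last n) (Fin.last n)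
      = ((1 - Δt * cfac l n : ℝ) : ℂ) ^ p := by
    rw [iterate_euler_apply_last_last hl, hρ₀, single_apply_same, mul_one]
  refine ⟨hiter, ?_⟩
  have hgrowth : 1 < |1 - Δt * cfac l n| := by
    rw [abs_of_neg (by linarith)]
    linarith
  simpa only [hiter, norm_pow, Complex.norm_real, Real.norm_eq_abs]
    using tendsto_pow_atTop_atTop_of_one_lt hgrowth

/-- Instability of the explicit Euler scheme above the CFL threshold: if `Δt c_n > 2`, then for
`ρ₀ = e_n e_nᴴ`, the `(n,n)` entry of `E^p(ρ₀)` equals `(1 − Δt c_n)^p` and its absolute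
value tends to `+∞` as `p → ∞`. -/
theorem stmt0 (l n : ℕ) (hl : 1 ≤ l) (hn : l ≤ n) (Δt : ℝ) (hΔt : 0 < Δt)
    (hCFL : 2 < Δt * cfac l n)
    (ρ₀ : Matrix (Fin (n+1)) (Fin (n+1)) ℂ)
    (hρ₀ : ρ₀ = Matrix.single (Fin.last n) (Fin.last n) 1) :
    (∀ p : ℕ, ((euler n l Δt)^[p] ρ₀) (Fin.last n) (Fin.last n)
        = (((1 - Δt * cfac l n : ℝ) : ℂ)) ^ p)
    ∧ Tendsto (fun p : ℕ =>
        ‖((euler n l Δt)^[p] ρ₀) (Fin.last n) (Fin.last n)‖) atTop atTop :=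
  stmt0_general l n hl Δt hCFL ρ₀ hρ₀
end

section
/- Decoupling of the top diagonal entry under the explicit Euler scheme: for every (n+1)×(n+1) complex matrix ρ and every p ∈ ℕ, the (n,n) entry of E^p(ρ) equals (1 − Δt·c_n)^p times the (n,n) entry of ρ. -/
open Matrix

lemma annpow (n : ℕ) : ∀ (l : ℕ) (i j : Fin (n+1)),
    (ann n ^ l) i j = if (i : ℕ) + l = (j : ℕ) then
      ((Real.sqrt (Nat.descFactorial (j : ℕ) l) : ℝ) : ℂ) else 0 := by
  intro l
  induction l with
  | zero =>
    intro i j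
    simp only [pow_zero, Matrix.one_apply, Nat.descFactorial_zero, Nat.cast_one,
      Real.sqrt_one, Complex.ofReal_one, Nat.add_zero]
    by_cases h : i = j
    · rw [if_pos h, if_pos (by rw [h])]
    · rw [if_neg h, if_neg (fun hv => h (Fin.ext hv))]
  | succ l ih =>
    intro i j
    rw [pow_succ, Matrix.mul_apply]
    by_cases h : (i : ℕ) + (l + 1) = (j : ℕ)
    · have hk : (i : ℕ) + l < n + 1 := by omega
      rw [if_pos h]
      rw [Finset.sum_eq_single (⟨(i : ℕ) + l, hk⟩ : Fin (n+1))]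
      · rw [ih]
        simp only [ann, Matrix.of_apply, Fin.val_mk]
        rw [if_true, if_pos (show (i:ℕ) + l + 1 = (j:ℕ) by omega)]
        have hj : (j : ℕ) = ((i:ℕ) + l) + 1 := by omega
        rw [hj, Nat.succ_descFactorial_succ]
        have h1 : (0:ℝ) ≤ (((i:ℕ) + l + 1 : ℕ) : ℝ) := by positivity
        rw [Nat.cast_mul, Real.sqrt_mul h1, Complex.ofReal_mul]
        ring
      · intro k _ hk'
        rw [ih]
        rw [if_neg, zero_mul]
        intro hik
        exact hk' (Fin.ext (by simpa using hik.symm))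
      · intro h'; exact absurd (Finset.mem_univ _) h'
    · rw [if_neg h]
      apply Finset.sum_eq_zero
      intro k _
      rw [ih]
      simp only [ann, Matrix.of_apply]
      by_cases h1 : (i : ℕ) + l = (k : ℕ)
      · rw [if_pos h1, if_neg (by omega), mul_zero]
      · rw [if_neg h1, zero_mul]

lemma ldagl (n l : ℕ) (i j : Fin (n+1)) :
    ((ann n ^ l)ᴴ * (ann n ^ l)) i j
      = if i = j then ((Nat.descFactorial (i : ℕ) l : ℝ) : ℂ) else 0 := by
  rw [Matrix.mul_apply]
  simp only [Matrix.conjTranspose_apply]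
  by_cases h : i = j
  · subst h
    rw [if_pos rfl]
    by_cases hli : l ≤ (i : ℕ)
    · have hk : (i : ℕ) - l < n + 1 := by omega
      rw [Finset.sum_eq_single (⟨(i : ℕ) - l, hk⟩ : Fin (n+1))]
      · rw [annpow]
        rw [if_pos (by simp; omega)]
        rw [Complex.star_def, Complex.conj_ofReal, ← Complex.ofReal_mul,
          Real.mul_self_sqrt (by positivity)]
      · intro k _ hk'
        rw [annpow]
        by_cases h1 : (k : ℕ) + l = (i : ℕ)
        · exact absurd (Fin.ext (by simp; omega)) hk'
        · rw [if_neg h1, star_zero, zero_mul]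
      · intro h'; exact absurd (Finset.mem_univ _) h'
    · rw [Nat.descFactorial_eq_zero_iff_lt.mpr (by omega)]
      simp only [Nat.cast_zero, Complex.ofReal_zero]
      apply Finset.sum_eq_zero
      intro k _
      rw [annpow, if_neg (by omega), star_zero, zero_mul]
  · rw [if_neg h]
    apply Finset.sum_eq_zero
    intro k _
    by_cases h1 : (k : ℕ) + l = (i : ℕ)
    · by_cases h2 : (k : ℕ) + l = (j : ℕ)
      · exact absurd (Fin.ext (show (i : ℕ) = (j : ℕ) by omega)) h
      · rw [annpow, annpow, if_neg h2, mul_zero]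
    · rw [annpow, if_neg h1, star_zero, zero_mul]

lemma euler_last (n l : ℕ) (hl : 1 ≤ l) (Δt : ℝ)
    (ρ : Matrix (Fin (n+1)) (Fin (n+1)) ℂ) :
    euler n l Δt ρ (Fin.last n) (Fin.last n)
      = ((1 - Δt * cfac l n : ℝ) : ℂ) * ρ (Fin.last n) (Fin.last n) := by
  have hrow : ∀ k : Fin (n+1), (ann n ^ l) (Fin.last n) k = 0 := by
    intro k
    rw [annpow, if_neg]
    simp only [Fin.val_last]
    omega
  have h1 : ((ann n ^ l) * ρ * (ann n ^ l)ᴴ) (Fin.last n) (Fin.last n) = 0 := by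
    rw [Matrix.mul_apply]
    apply Finset.sum_eq_zero
    intro k _
    rw [Matrix.conjTranspose_apply, hrow, star_zero, mul_zero]
  have h2 : ((ann n ^ l)ᴴ * (ann n ^ l) * ρ) (Fin.last n) (Fin.last n)
      = ((Nat.descFactorial n l : ℝ) : ℂ) * ρ (Fin.last n) (Fin.last n) := by
    rw [Matrix.mul_apply]
    rw [Finset.sum_eq_single (Fin.last n)]
    · rw [ldagl, if_pos rfl, Fin.val_last]
    · intro k _ hk
      rw [ldagl, if_neg (fun hv => hk hv.symm), zero_mul]
    · intro h'; exact absurd (Finset.mem_univ _) h'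
  have h3 : (ρ * ((ann n ^ l)ᴴ * (ann n ^ l))) (Fin.last n) (Fin.last n)
      = ((Nat.descFactorial n l : ℝ) : ℂ) * ρ (Fin.last n) (Fin.last n) := by
    rw [Matrix.mul_apply]
    rw [Finset.sum_eq_single (Fin.last n)]
    · rw [ldagl, if_pos rfl, Fin.val_last, mul_comm]
    · intro k _ hk
      rw [ldagl, if_neg hk, mul_zero]
    · intro h'; exact absurd (Finset.mem_univ _) h'
  simp only [euler, Matrix.add_apply, Matrix.smul_apply, Matrix.sub_apply, h1, h2, h3,
    cfac, smul_eq_mul]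
  push_cast
  ring

/-- Decoupling of the top diagonal entry under the explicit Euler scheme: for every matrix `ρ`
and every `p ∈ ℕ`, the `(n,n)` entry of `E^p(ρ)` equals `(1 − Δt c_n)^p` times the `(n,n)`
entry of `ρ`. -/
theorem stmt1 (l n : ℕ) (hl : 1 ≤ l) (hn : l ≤ n) (Δt : ℝ) (hΔt : 0 < Δt)
    (ρ : Matrix (Fin (n+1)) (Fin (n+1)) ℂ) (p : ℕ) :
    ((euler n l Δt)^[p] ρ) (Fin.last n) (Fin.last n)
      = (((1 - Δt * cfac l n : ℝ) : ℂ)) ^ p * ρ (Fin.last n) (Fin.last n) := by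
  induction p with
  | zero => simp
  | succ p ih =>
    rw [Function.iterate_succ_apply', euler_last n l hl, ih, pow_succ]
    ring
end

section
/- The trace-preserving normalization does not change the order of the scheme: there exists an absolute constant C > 0 such that for every d ≥ 1, every 0 < ε ≤ 1/2, and all d×d complex matrices M_0,…,M_m with ‖S − I‖ ≤ ε where S = Σⱼ MⱼᴴMⱼ (so S is positive definite), setting M̃ⱼ = Mⱼ·S^{−1/2} (with S^{−1/2} the inverse of the positive definite square root of S), one has for every d×d matrix ρ: ‖Σⱼ M̃ⱼ ρ M̃ⱼᴴ − Σⱼ Mⱼ ρ Mⱼᴴ‖₁ ≤ C·ε·‖ρ‖₁. -/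
open Matrix
open scoped ComplexOrder

/-- The positive semidefinite square root of a matrix (defined to be `0` if the matrix is not
positive semidefinite). -/
noncomputable def matSqrt {d : ℕ} (A : Matrix (Fin d) (Fin d) ℂ) : Matrix (Fin d) (Fin d) ℂ :=
  open scoped Classical in
  if h : A.PosSemidef then
    (h.1.eigenvectorUnitary : Matrix (Fin d) (Fin d) ℂ) *
      diagonal (((↑) : ℝ → ℂ) ∘ Real.sqrt ∘ h.1.eigenvalues) *
      star (h.1.eigenvectorUnitary : Matrix (Fin d) (Fin d) ℂ)
  else 0

/-- The trace norm `‖A‖₁ = Re (Tr √(AᴴA))` of a complex matrix. -/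
noncomputable def traceNorm {d : ℕ} (A : Matrix (Fin d) (Fin d) ℂ) : ℝ :=
  (Matrix.trace (matSqrt (Aᴴ * A))).re

/-- The operator norm of a matrix induced by the Euclidean (ℓ²) norm on `ℂ^d`. -/
noncomputable def opNorm {d : ℕ} (A : Matrix (Fin d) (Fin d) ℂ) : ℝ :=
  ‖Matrix.toEuclideanCLM (𝕜 := ℂ) A‖

/-!
Put `T = S^{-1/2}`. Since `T` is Hermitian, the difference of the two maps is
`ρ ↦ Σⱼ Mⱼ (TρT − ρ) Mⱼᴴ`. The trace norm is dual to the operator norm,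
`‖A‖₁ = max_{‖U‖ ≤ 1} Re Tr (U A)`, the maximum being attained at `U = V Wᴴ` for a factorization
`A = W diag(σ) Vᴴ` by singular values. Duality gives `‖Σⱼ Mⱼ X Mⱼᴴ‖₁ ≤ ‖S‖ ‖X‖₁` (by Cauchy–Schwarz
over `j`) and `‖TρT − ρ‖₁ ≤ (‖T‖ + 1) ‖T − 1‖ ‖ρ‖₁`. The spectrum of `S` lies in `[1 − ε, 1 + ε]`,
so the functional calculus bounds `‖T − 1‖` by `sup |x^{-1/2} − 1| ≤ 2ε`, and `C = 9` works.
-/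

open scoped Matrix.Norms.L2Operator

lemma abs_inv_sqrt_sub_one_le {x ε : ℝ} (hx : |x - 1| ≤ ε) (hε : ε ≤ 1 / 2) :
    |(√x)⁻¹ - 1| ≤ 2 * ε := by
  have hx2 : 1 / 2 ≤ x := by linarith [(abs_le.1 hx).1]
  have hs : √x ^ 2 = x := Real.sq_sqrt (by linarith)
  have hs0 : 0 < √x := Real.sqrt_pos.2 (by linarith)
  have key : (√x)⁻¹ - 1 = (1 - x) / (√x * (1 + √x)) := by
    field_simp; nlinarith
  have hden : 1 / 2 ≤ √x * (1 + √x) := by nlinarith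
  rw [key, abs_div, abs_of_pos (a := √x * (1 + √x)) (by positivity), abs_sub_comm,
    div_le_iff₀ (by positivity)]
  nlinarith [abs_nonneg (x - 1)]

namespace ContinuousLinearMap

variable {𝕜 E F ι : Type*} [RCLike 𝕜] [NormedAddCommGroup E] [InnerProductSpace 𝕜 E]
  [NormedAddCommGroup F] [InnerProductSpace 𝕜 F] [CompleteSpace E] [CompleteSpace F]

lemma sum_norm_sq_apply_le (s : Finset ι) (T : ι → E →L[𝕜] F) (x : E) :
    ∑ j ∈ s, ‖T j x‖ ^ 2 ≤ ‖∑ j ∈ s, adjoint (T j) ∘L T j‖ * ‖x‖ ^ 2 := by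
  calc ∑ j ∈ s, ‖T j x‖ ^ 2 = RCLike.re (inner 𝕜 ((∑ j ∈ s, adjoint (T j) ∘L T j) x) x) := by
        simp [apply_norm_sq_eq_inner_adjoint_left, sum_inner]
    _ ≤ ‖(∑ j ∈ s, adjoint (T j) ∘L T j) x‖ * ‖x‖ := re_inner_le_norm _ _
    _ ≤ ‖∑ j ∈ s, adjoint (T j) ∘L T j‖ * ‖x‖ ^ 2 := by
        rw [sq, ← mul_assoc]; gcongr; exact le_opNorm _ _

lemma norm_sum_adjoint_comp_comp_le (s : Finset ι) (T : ι → E →L[𝕜] F) (U : F →L[𝕜] F) :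
    ‖∑ j ∈ s, adjoint (T j) ∘L U ∘L T j‖ ≤ ‖U‖ * ‖∑ j ∈ s, adjoint (T j) ∘L T j‖ := by
  set c := ‖∑ j ∈ s, adjoint (T j) ∘L T j‖
  refine opNorm_le_of_re_inner_le (by positivity) fun x y hx hy => ?_
  have hsq : ∀ z : E, ‖z‖ = 1 → ∑ j ∈ s, ‖T j z‖ ^ 2 ≤ c := fun z hz => by
    simpa [hz] using sum_norm_sq_apply_le s T z
  calc RCLike.re (inner 𝕜 ((∑ j ∈ s, adjoint (T j) ∘L U ∘L T j) x) y)
      = ∑ j ∈ s, RCLike.re (inner 𝕜 (U (T j x)) (T j y)) := by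
        simp [sum_inner, adjoint_inner_left]
    _ ≤ ∑ j ∈ s, ‖U‖ * (‖T j x‖ * ‖T j y‖) := by
        gcongr with j
        refine (re_inner_le_norm _ _).trans ?_
        rw [← mul_assoc]; gcongr; exact le_opNorm _ _
    _ ≤ ‖U‖ * (√(∑ j ∈ s, ‖T j x‖ ^ 2) * √(∑ j ∈ s, ‖T j y‖ ^ 2)) := by
        rw [← Finset.mul_sum]; gcongr; exact Real.sum_mul_le_sqrt_mul_sqrt _ _ _
    _ ≤ ‖U‖ * (√c * √c) := by gcongr <;> [exact hsq x hx; exact hsq y hy]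
    _ = ‖U‖ * c := by rw [Real.mul_self_sqrt (norm_nonneg _)]

end ContinuousLinearMap

namespace Matrix

variable {n 𝕜 ι : Type*} [Fintype n] [DecidableEq n] [RCLike 𝕜]

lemma l2_opNorm_one_le : ‖(1 : Matrix n n 𝕜)‖ ≤ 1 := by
  rw [← diagonal_one, l2_opNorm_diagonal]
  exact (pi_norm_const_le 1).trans norm_one.le

lemma norm_apply_le_l2_opNorm {m : Type*} [Fintype m] (Y : Matrix m n 𝕜) (i : m) (j : n) :
    ‖Y i j‖ ≤ ‖Y‖ := by
  have h := l2_opNorm_mulVec Y (EuclideanSpace.single j 1)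
  rw [PiLp.norm_single, norm_one, mul_one] at h
  refine le_trans ?_ h
  simpa [mulVec_single] using
    PiLp.norm_apply_le ((EuclideanSpace.equiv m 𝕜).symm (Y *ᵥ EuclideanSpace.single j 1)) i

lemma norm_sum_conjTranspose_mul_mul_le (s : Finset ι) (M : ι → Matrix n n 𝕜)
    (U : Matrix n n 𝕜) : ‖∑ j ∈ s, (M j)ᴴ * U * M j‖ ≤ ‖U‖ * ‖∑ j ∈ s, (M j)ᴴ * M j‖ := by
  have hφ : ∀ N : Matrix n n 𝕜, toEuclideanCLM (𝕜 := 𝕜) Nᴴ =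
      ContinuousLinearMap.adjoint (toEuclideanCLM (𝕜 := 𝕜) N) := fun N => by
    rw [← star_eq_conjTranspose, map_star, ContinuousLinearMap.star_eq_adjoint]
  simpa only [← l2_opNorm_toEuclideanCLM, map_sum, map_mul, hφ, ContinuousLinearMap.mul_def,
    ContinuousLinearMap.comp_assoc] using
    ContinuousLinearMap.norm_sum_adjoint_comp_comp_le s (fun j => toEuclideanCLM (𝕜 := 𝕜) (M j))
      (toEuclideanCLM (𝕜 := 𝕜) U)

lemma exists_contraction_of_conjTranspose_mul_self_eq_diagonal {B : Matrix n n 𝕜} {σ : n → ℝ}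
    (hB : Bᴴ * B = diagonal fun j => (σ j : 𝕜) ^ 2) :
    ∃ W : Matrix n n 𝕜, ‖W‖ ≤ 1 ∧ B = W * diagonal (fun j => (σ j : 𝕜)) ∧
      Wᴴ * B = diagonal fun j => (σ j : 𝕜) := by
  set c : n → 𝕜 := fun j => (σ j : 𝕜)
  have hstar : star c⁻¹ = c⁻¹ := funext fun j => by simp [c]
  have hW : (B * diagonal c⁻¹)ᴴ = diagonal c⁻¹ * Bᴴ := by
    rw [conjTranspose_mul, diagonal_conjTranspose, hstar]
  have hWB : (B * diagonal c⁻¹)ᴴ * B = diagonal c := by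
    rw [hW, mul_assoc, hB, diagonal_mul_diagonal]
    congr 1; funext j
    rcases eq_or_ne (σ j) 0 with h | h <;> simp [c, h, sq]
  refine ⟨B * diagonal c⁻¹, ?_, ?_, hWB⟩
  · have hWW : (B * diagonal c⁻¹)ᴴ * (B * diagonal c⁻¹) = diagonal fun j => c j * (c j)⁻¹ := by
      rw [← mul_assoc, hWB, diagonal_mul_diagonal]; rfl
    have h1 : ‖(B * diagonal c⁻¹)ᴴ * (B * diagonal c⁻¹)‖ ≤ 1 := by
      rw [hWW, l2_opNorm_diagonal, pi_norm_le_iff_of_nonneg zero_le_one]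
      intro j
      rcases eq_or_ne (σ j) 0 with h | h <;> simp [c, h]
    rw [l2_opNorm_conjTranspose_mul_self] at h1
    nlinarith [norm_nonneg (B * diagonal c⁻¹)]
  · -- the columns of `B` with `σ j = 0` vanish, since their Gram entries do
    have hker : (B * diagonal (1 - c⁻¹ * c))ᴴ * (B * diagonal (1 - c⁻¹ * c)) = 0 := by
      rw [conjTranspose_mul, diagonal_conjTranspose, mul_assoc, ← mul_assoc Bᴴ, hB,
        diagonal_mul_diagonal, diagonal_mul_diagonal, ← diagonal_zero]
      congr 1; funext j
      rcases eq_or_ne (σ j) 0 with h | h <;> simp [c, h]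
    have hsub : diagonal (1 - c⁻¹ * c) = 1 - diagonal c⁻¹ * diagonal c := by
      rw [diagonal_mul_diagonal, ← diagonal_one, diagonal_sub]; rfl
    rw [conjTranspose_mul_self_eq_zero, hsub, mul_sub, mul_one, sub_eq_zero, ← mul_assoc] at hker
    exact hker

lemma norm_le_one_add_of_norm_sub_one_le {A : Matrix n n 𝕜} {r : ℝ} (h : ‖A - 1‖ ≤ r) :
    ‖A‖ ≤ 1 + r := by
  linarith [norm_le_norm_sub_add A 1, l2_opNorm_one_le (n := n) (𝕜 := 𝕜)]

lemma abs_sub_one_le_of_mem_spectrum {S : Matrix n n ℂ} {x : ℝ} (hx : x ∈ spectrum ℝ S) :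
    |x - 1| ≤ ‖S - 1‖ := by
  have : Nontrivial (Matrix n n ℂ) := by
    by_contra h
    rw [not_nontrivial_iff_subsingleton] at h
    simp [spectrum.of_subsingleton] at hx
  refine spectrum.norm_le_norm_of_mem (𝕜 := ℝ) ?_
  rw [← map_one (algebraMap ℝ _), ← spectrum.sub_singleton_eq]
  exact Set.sub_mem_sub hx rfl

lemma norm_cfc_sub_one_le {S : Matrix n n ℂ} (hS : IsSelfAdjoint S) (f : ℝ → ℝ) {c : ℝ}
    (hc : 0 ≤ c) (h : ∀ x ∈ spectrum ℝ S, |f x - 1| ≤ c) : ‖cfc f S - 1‖ ≤ c := by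
  rw [← cfc_const_one ℝ S, ← cfc_sub f _ S (S.finite_real_spectrum.continuousOn _)]
  exact norm_cfc_le hc h

end Matrix

section TraceNorm
variable {d : ℕ}

noncomputable def singularValues (A : Matrix (Fin d) (Fin d) ℂ) (j : Fin d) : ℝ :=
  √((posSemidef_conjTranspose_mul_self A).1.eigenvalues j)

lemma singularValues_nonneg (A : Matrix (Fin d) (Fin d) ℂ) (j : Fin d) : 0 ≤ singularValues A j :=
  Real.sqrt_nonneg _

lemma traceNorm_eq_sum_singularValues (A : Matrix (Fin d) (Fin d) ℂ) :
    traceNorm A = ∑ j, singularValues A j := by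
  rw [traceNorm, matSqrt, dif_pos (posSemidef_conjTranspose_mul_self A), trace_mul_cycle,
    Unitary.coe_star_mul_self, one_mul, trace_diagonal]
  simp [singularValues]

lemma traceNorm_nonneg (A : Matrix (Fin d) (Fin d) ℂ) : 0 ≤ traceNorm A := by
  rw [traceNorm_eq_sum_singularValues]
  exact Finset.sum_nonneg fun j _ => singularValues_nonneg A j

lemma exists_factorization_singularValues (A : Matrix (Fin d) (Fin d) ℂ) :
    ∃ W V : Matrix (Fin d) (Fin d) ℂ, ‖W‖ ≤ 1 ∧ V ∈ unitary (Matrix (Fin d) (Fin d) ℂ) ∧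
      A = W * diagonal (fun j => (singularValues A j : ℂ)) * Vᴴ ∧
      Wᴴ * A * V = diagonal fun j => (singularValues A j : ℂ) := by
  set H := posSemidef_conjTranspose_mul_self A
  set V := (H.1.eigenvectorUnitary : Matrix (Fin d) (Fin d) ℂ)
  have hV : V ∈ unitary (Matrix (Fin d) (Fin d) ℂ) := H.1.eigenvectorUnitary.2
  have hB : (A * V)ᴴ * (A * V) = diagonal fun j => (singularValues A j : ℂ) ^ 2 := by
    have := H.1.conjStarAlgAut_star_eigenvectorUnitary
    rw [Unitary.conjStarAlgAut_star_apply] at this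
    rw [conjTranspose_mul, ← star_eq_conjTranspose V, mul_assoc, ← mul_assoc Aᴴ, ← mul_assoc, this]
    congr 1; funext j
    simp [singularValues, ← Complex.ofReal_pow, Real.sq_sqrt (H.eigenvalues_nonneg j)]
  obtain ⟨W, hW, hBW, hWB⟩ := exists_contraction_of_conjTranspose_mul_self_eq_diagonal
    (σ := singularValues A) hB
  refine ⟨W, V, hW, hV, ?_, by rw [mul_assoc]; exact hWB⟩
  calc A = A * V * Vᴴ := by
        rw [mul_assoc, ← star_eq_conjTranspose, Unitary.mul_star_self_of_mem hV, mul_one]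
    _ = _ := by rw [hBW]; rfl

lemma norm_trace_mul_le (X A : Matrix (Fin d) (Fin d) ℂ) :
    ‖trace (X * A)‖ ≤ ‖X‖ * traceNorm A := by
  obtain ⟨W, V, hW, hV, hA, -⟩ := exists_factorization_singularValues A
  have hY : ‖Vᴴ * X * W‖ ≤ ‖X‖ := by
    rw [← star_eq_conjTranspose, mul_assoc, CStarRing.norm_mem_unitary_mul _ (Unitary.star_mem hV)]
    exact (norm_mul_le X W).trans (mul_le_of_le_one_right (norm_nonneg X) hW)
  have htr : trace (X * A) = ∑ j, (Vᴴ * X * W) j j * singularValues A j := by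
    conv_lhs => rw [hA, ← mul_assoc, ← mul_assoc, trace_mul_comm, ← mul_assoc, ← mul_assoc]
    simp [trace, mul_diagonal]
  calc ‖trace (X * A)‖ ≤ ∑ j, ‖(Vᴴ * X * W) j j‖ * singularValues A j := by
        rw [htr]
        refine (norm_sum_le _ _).trans_eq (Finset.sum_congr rfl fun j _ => ?_)
        rw [norm_mul, Complex.norm_real, Real.norm_of_nonneg (singularValues_nonneg A j)]
    _ ≤ ∑ j, ‖X‖ * singularValues A j := by
        gcongr with j
        · exact singularValues_nonneg A j
        · exact (norm_apply_le_l2_opNorm _ j j).trans hY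
    _ = ‖X‖ * traceNorm A := by rw [traceNorm_eq_sum_singularValues, Finset.mul_sum]

lemma exists_norm_le_one_re_trace_mul_eq (A : Matrix (Fin d) (Fin d) ℂ) :
    ∃ U : Matrix (Fin d) (Fin d) ℂ, ‖U‖ ≤ 1 ∧ (trace (U * A)).re = traceNorm A := by
  obtain ⟨W, V, hW, hV, -, hD⟩ := exists_factorization_singularValues A
  refine ⟨V * Wᴴ, ?_, ?_⟩
  · rwa [CStarRing.norm_mem_unitary_mul _ hV, l2_opNorm_conjTranspose]
  · rw [mul_assoc, trace_mul_comm, hD, trace_diagonal, traceNorm_eq_sum_singularValues]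
    simp

lemma traceNorm_le_of_forall_re_trace_mul_le {A : Matrix (Fin d) (Fin d) ℂ} {c : ℝ}
    (h : ∀ U : Matrix (Fin d) (Fin d) ℂ, ‖U‖ ≤ 1 → (trace (U * A)).re ≤ c) : traceNorm A ≤ c := by
  obtain ⟨U, hU, hA⟩ := exists_norm_le_one_re_trace_mul_eq A
  exact hA ▸ h U hU

lemma re_trace_mul_le (X A : Matrix (Fin d) (Fin d) ℂ) :
    (trace (X * A)).re ≤ ‖X‖ * traceNorm A :=
  (Complex.re_le_norm _).trans (norm_trace_mul_le X A)

lemma traceNorm_add_le (A B : Matrix (Fin d) (Fin d) ℂ) :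
    traceNorm (A + B) ≤ traceNorm A + traceNorm B := by
  refine traceNorm_le_of_forall_re_trace_mul_le fun U hU => ?_
  rw [mul_add, trace_add, Complex.add_re]
  gcongr <;> refine (re_trace_mul_le U _).trans (mul_le_of_le_one_left (traceNorm_nonneg _) hU)

lemma traceNorm_mul_le (X A : Matrix (Fin d) (Fin d) ℂ) :
    traceNorm (X * A) ≤ ‖X‖ * traceNorm A := by
  refine traceNorm_le_of_forall_re_trace_mul_le fun U hU => ?_
  rw [← mul_assoc]
  refine (re_trace_mul_le _ A).trans (mul_le_mul_of_nonneg_right ?_ (traceNorm_nonneg A))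
  exact (norm_mul_le U X).trans (mul_le_of_le_one_left (norm_nonneg X) hU)

lemma traceNorm_mul_le' (A X : Matrix (Fin d) (Fin d) ℂ) :
    traceNorm (A * X) ≤ traceNorm A * ‖X‖ := by
  refine traceNorm_le_of_forall_re_trace_mul_le fun U hU => ?_
  rw [← mul_assoc, trace_mul_cycle, mul_comm (traceNorm A)]
  refine (re_trace_mul_le _ A).trans (mul_le_mul_of_nonneg_right ?_ (traceNorm_nonneg A))
  exact (norm_mul_le X U).trans (mul_le_of_le_one_right (norm_nonneg X) hU)

lemma traceNorm_sum_mul_mul_conjTranspose_le {ι : Type*} (s : Finset ι)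
    (M : ι → Matrix (Fin d) (Fin d) ℂ) (X : Matrix (Fin d) (Fin d) ℂ) :
    traceNorm (∑ j ∈ s, M j * X * (M j)ᴴ) ≤ ‖∑ j ∈ s, (M j)ᴴ * M j‖ * traceNorm X := by
  refine traceNorm_le_of_forall_re_trace_mul_le fun U hU => ?_
  have htr : trace (U * ∑ j ∈ s, M j * X * (M j)ᴴ) = trace ((∑ j ∈ s, (M j)ᴴ * U * M j) * X) := by
    simp only [Finset.mul_sum, Finset.sum_mul, trace_sum]
    refine Finset.sum_congr rfl fun j _ => ?_
    rw [← mul_assoc, ← mul_assoc, trace_mul_comm, ← mul_assoc, ← mul_assoc]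
  rw [htr]
  refine (re_trace_mul_le _ X).trans (mul_le_mul_of_nonneg_right ?_ (traceNorm_nonneg X))
  exact (norm_sum_conjTranspose_mul_mul_le s M U).trans
    (mul_le_of_le_one_left (norm_nonneg _) hU)

end TraceNorm

section InvSqrt
variable {d : ℕ}

lemma matSqrt_eq_cfc {S : Matrix (Fin d) (Fin d) ℂ} (hS : S.PosSemidef) :
    matSqrt S = cfc Real.sqrt S := by
  rw [matSqrt, dif_pos hS, hS.1.cfc_eq, IsHermitian.cfc, Unitary.conjStarAlgAut_apply]
  rfl

lemma isHermitian_inv_matSqrt {S : Matrix (Fin d) (Fin d) ℂ} (hS : S.PosSemidef) :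
    (matSqrt S)⁻¹.IsHermitian :=
  IsHermitian.inv (matSqrt_eq_cfc hS ▸ cfc_predicate _ S)

lemma inv_matSqrt_eq_cfc {S : Matrix (Fin d) (Fin d) ℂ} (hS : S.PosSemidef)
    (hpos : ∀ x ∈ spectrum ℝ S, 0 < x) : (matSqrt S)⁻¹ = cfc (fun x => (√x)⁻¹) S := by
  have hcont : ContinuousOn (fun x => (√x)⁻¹) (spectrum ℝ S) :=
    S.finite_real_spectrum.continuousOn _
  refine inv_eq_right_inv ?_
  rw [matSqrt_eq_cfc hS, ← cfc_mul .., ← cfc_const_one ℝ S hS.1]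
  exact cfc_congr fun x hx => mul_inv_cancel₀ (Real.sqrt_pos.2 (hpos x hx)).ne'

lemma norm_inv_matSqrt_sub_one_le {S : Matrix (Fin d) (Fin d) ℂ} {ε : ℝ} (hS : S.PosSemidef)
    (hε : ε ≤ 1 / 2) (h : ‖S - 1‖ ≤ ε) : ‖(matSqrt S)⁻¹ - 1‖ ≤ 2 * ε := by
  have hspec : ∀ x ∈ spectrum ℝ S, |x - 1| ≤ ε := fun x hx =>
    (abs_sub_one_le_of_mem_spectrum hx).trans h
  have hpos : ∀ x ∈ spectrum ℝ S, 0 < x := fun x hx => by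
    linarith [(abs_le.1 (hspec x hx)).1]
  rw [inv_matSqrt_eq_cfc hS hpos]
  exact norm_cfc_sub_one_le hS.1 _ (by linarith [(norm_nonneg _).trans h])
    fun x hx => abs_inv_sqrt_sub_one_le (hspec x hx) hε

end InvSqrt

lemma traceNorm_mul_mul_sub_le {d : ℕ} (T ρ : Matrix (Fin d) (Fin d) ℂ) :
    traceNorm (T * ρ * T - ρ) ≤ (‖T‖ + 1) * ‖T - 1‖ * traceNorm ρ := by
  have hsplit : T * ρ * T - ρ = (T - 1) * (ρ * T) + ρ * (T - 1) := by noncomm_ring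
  calc traceNorm (T * ρ * T - ρ)
      ≤ ‖T - 1‖ * traceNorm (ρ * T) + traceNorm ρ * ‖T - 1‖ := by
        rw [hsplit]
        exact (traceNorm_add_le _ _).trans (add_le_add (traceNorm_mul_le _ _) (traceNorm_mul_le' _ _))
    _ ≤ ‖T - 1‖ * (traceNorm ρ * ‖T‖) + traceNorm ρ * ‖T - 1‖ := by
        gcongr; exact traceNorm_mul_le' ρ T
    _ = (‖T‖ + 1) * ‖T - 1‖ * traceNorm ρ := by ring

lemma sum_mul_mul_conjTranspose_sub_of_isHermitian {d : ℕ} {ι : Type*} (s : Finset ι)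
    (M : ι → Matrix (Fin d) (Fin d) ℂ) {T : Matrix (Fin d) (Fin d) ℂ} (hT : T.IsHermitian)
    (ρ : Matrix (Fin d) (Fin d) ℂ) :
    ∑ j ∈ s, (M j * T) * ρ * (M j * T)ᴴ - ∑ j ∈ s, M j * ρ * (M j)ᴴ
      = ∑ j ∈ s, M j * (T * ρ * T - ρ) * (M j)ᴴ := by
  rw [← Finset.sum_sub_distrib]
  refine Finset.sum_congr rfl fun j _ => ?_
  rw [conjTranspose_mul, hT.eq]
  noncomm_ring

/-- The trace-preserving normalization does not change the order of the scheme: there is an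
absolute constant `C > 0` such that whenever `‖S − I‖ ≤ ε ≤ 1/2` with `S = Σⱼ MⱼᴴMⱼ`, the
normalized Kraus map differs from the original one by at most `C ε ‖ρ‖₁` in trace norm. -/
theorem stmt6 :
    ∃ C : ℝ, 0 < C ∧
      ∀ d : ℕ, 1 ≤ d → ∀ ε : ℝ, 0 < ε → ε ≤ 1/2 → ∀ m : ℕ,
        ∀ M : Fin (m+1) → Matrix (Fin d) (Fin d) ℂ,
          opNorm ((∑ j, (M j)ᴴ * M j) - 1) ≤ ε →
            ∀ ρ : Matrix (Fin d) (Fin d) ℂ,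
              traceNorm
                ((∑ j, (M j * (matSqrt (∑ i, (M i)ᴴ * M i))⁻¹) * ρ *
                    (M j * (matSqrt (∑ i, (M i)ᴴ * M i))⁻¹)ᴴ)
                  - ∑ j, M j * ρ * (M j)ᴴ)
              ≤ C * ε * traceNorm ρ := by
  refine ⟨9, by norm_num, fun d _ ε hε0 hε m M hM ρ => ?_⟩
  set S := ∑ i, (M i)ᴴ * M i
  have hSε : ‖S - 1‖ ≤ ε := hM
  have hS : S.PosSemidef := posSemidef_sum _ fun j _ => posSemidef_conjTranspose_mul_self (M j)
  have hT : ‖(matSqrt S)⁻¹ - 1‖ ≤ 2 * ε := norm_inv_matSqrt_sub_one_le hS hε hSε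
  rw [sum_mul_mul_conjTranspose_sub_of_isHermitian _ M (isHermitian_inv_matSqrt hS)]
  calc _ ≤ ‖S‖ * traceNorm ((matSqrt S)⁻¹ * ρ * (matSqrt S)⁻¹ - ρ) :=
        traceNorm_sum_mul_mul_conjTranspose_le _ _ _
    _ ≤ (1 + ε) * ((1 + 2 * ε + 1) * (2 * ε) * traceNorm ρ) := by
        gcongr
        · exact traceNorm_nonneg _
        · exact norm_le_one_add_of_norm_sub_one_le hSε
        · refine (traceNorm_mul_mul_sub_le _ ρ).trans ?_
          gcongr
          · exact traceNorm_nonneg ρ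
          · exact norm_le_one_add_of_norm_sub_one_le hT
    _ = ((1 + ε) * (1 + 2 * ε + 1) * 2) * (ε * traceNorm ρ) := by ring
    _ ≤ 9 * (ε * traceNorm ρ) :=
        mul_le_mul_of_nonneg_right (by nlinarith) (mul_nonneg hε0.le (traceNorm_nonneg ρ))
    _ = 9 * ε * traceNorm ρ := by ring
end

section
/- Operator bounds for the difference between the Cayley transform and the first-order Euler approximation of a Hamiltonian evolution: let H be a Hermitian d×d complex matrix and Δt ≥ 0; then I + i(Δt/2)H is invertible, and setting A = (I − i(Δt/2)H)(I + i(Δt/2)H)^{−1} − (I − iΔt·H), one has both AᴴA ≤ Δt²·H² and AᴴA ≤ Δt⁴·H⁴ in the Loewner order. -/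
open Matrix
open scoped ComplexOrder

/-- Operator bounds for the difference between the Cayley transform and the first-order Euler
approximation of a Hamiltonian evolution: `I + i(Δt/2)H` is invertible and, with
`A = (I − i(Δt/2)H)(I + i(Δt/2)H)^{−1} − (I − iΔt H)`, one has `AᴴA ≤ Δt² H²` and
`AᴴA ≤ Δt⁴ H⁴` in the Loewner order. -/
theorem stmt13 {d : ℕ} (H : Matrix (Fin d) (Fin d) ℂ) (hH : H.IsHermitian)
    (Δt : ℝ) (hΔt : 0 ≤ Δt)
    (A : Matrix (Fin d) (Fin d) ℂ)
    (hA : A = (1 - (Complex.I * ((Δt / 2 : ℝ) : ℂ)) • H) *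
        (1 + (Complex.I * ((Δt / 2 : ℝ) : ℂ)) • H)⁻¹
      - (1 - (Complex.I * (Δt : ℂ)) • H)) :
    IsUnit (1 + (Complex.I * ((Δt / 2 : ℝ) : ℂ)) • H)
    ∧ (((Δt ^ 2 : ℝ) : ℂ) • H ^ 2 - Aᴴ * A).PosSemidef
    ∧ (((Δt ^ 4 : ℝ) : ℂ) • H ^ 4 - Aᴴ * A).PosSemidef := by
  set c : ℂ := Complex.I * ((Δt / 2 : ℝ) : ℂ) with hc
  set M : Matrix (Fin d) (Fin d) ℂ := 1 + c • H with hMdef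
  have hstarc : star c = -c := by simp [hc, Complex.ext_iff]
  have hMH : Mᴴ = 1 - c • H := by
    simp [hMdef, conjTranspose_add, conjTranspose_smul, hH.eq, hstarc, sub_eq_add_neg, neg_smul]
  have hNM : Mᴴ * M = 1 + (((Δt/2)^2 : ℝ) : ℂ) • (H * H) := by
    rw [hMH, hMdef]
    simp only [sub_mul, mul_add, mul_one, one_mul, smul_mul_assoc, mul_smul_comm, smul_smul]
    match_scalars <;>
      first
        | ring1
        | (simp only [hc]; push_cast; ring1)
        | (simp only [hc]; push_cast; ring_nf; simp [Complex.I_sq]; push_cast; ring1)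
        | (simp only [hc]; push_cast; ring_nf; simp [Complex.I_sq])
  -- PosDef of MᴴM
  have hBB : (((Δt/2 : ℝ) : ℂ) • H)ᴴ * (((Δt/2 : ℝ) : ℂ) • H)
      = (((Δt/2)^2 : ℝ) : ℂ) • (H * H) := by
    simp [conjTranspose_smul, hH.eq, smul_mul_assoc, mul_smul_comm, smul_smul,
      Complex.conj_ofReal]
    push_cast
    ring_nf
  have hPD : (Mᴴ * M).PosDef := by
    rw [hNM, ← hBB]
    exact Matrix.PosDef.one.add_posSemidef (posSemidef_conjTranspose_mul_self _)
  have hdet : IsUnit M.det := by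
    have h1 : IsUnit (Mᴴ * M).det := hPD.isUnit.map detMonoidHom
    rw [Matrix.det_mul] at h1
    exact isUnit_of_mul_isUnit_right h1
  have hdetH : IsUnit Mᴴ.det := by
    rw [Matrix.det_conjTranspose]
    exact hdet.star
  have hUnit : IsUnit M := (Matrix.isUnit_iff_isUnit_det M).mpr hdet
  have hMinv : M⁻¹ * M = 1 := Matrix.nonsing_inv_mul M hdet
  have hMinv' : M * M⁻¹ = 1 := Matrix.mul_nonsing_inv M hdet
  -- A * M
  have hAM : A * M = (2 * c * c) • (H * H) := by
    rw [hA]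
    rw [sub_mul, mul_assoc, hMinv, mul_one, hMdef]
    simp only [sub_mul, mul_add, mul_one, one_mul, smul_mul_assoc, mul_smul_comm, smul_smul]
    match_scalars <;>
      first
        | ring1
        | (simp only [hc]; push_cast; ring1)
        | (simp only [hc]; push_cast; ring_nf; simp [Complex.I_sq]; push_cast; ring1)
        | (simp only [hc]; push_cast; ring_nf; simp [Complex.I_sq])
  have hAeq : A = (2 * c * c) • (H * H) * M⁻¹ := by
    rw [← hAM, mul_assoc, hMinv', mul_one]
  -- Aᴴ
  have hks : star (2 * c * c) = 2 * c * c := by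
    rw [star_mul', star_mul', hstarc]
    simp
  have hAH : Aᴴ = (2 * c * c) • ((M⁻¹)ᴴ * (H * H)) := by
    rw [hAeq]
    simp [conjTranspose_mul, conjTranspose_smul, hH.eq, hks, mul_smul_comm]
  have hAA : Aᴴ * A = ((2*c*c) * (2*c*c)) • ((M⁻¹)ᴴ * (H * H * (H * H)) * M⁻¹) := by
    rw [hAH, hAeq]
    simp only [smul_mul_assoc, mul_smul_comm, smul_smul, mul_assoc]
  -- conjugation identity
  have hconj : ∀ P : Matrix (Fin d) (Fin d) ℂ, (M⁻¹)ᴴ * (Mᴴ * P * M) * M⁻¹ = P := by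
    intro P
    rw [Matrix.conjTranspose_nonsing_inv]
    simp only [← mul_assoc]
    rw [Matrix.nonsing_inv_mul _ hdetH, one_mul, mul_assoc, hMinv', mul_one]
  -- psd helper
  have hps : ∀ (a : ℝ), 0 ≤ a → ∀ B : Matrix (Fin d) (Fin d) ℂ,
      (((a : ℝ) : ℂ) • (Bᴴ * B)).PosSemidef := by
    intro a ha B
    have h : (((a : ℝ) : ℂ) • (Bᴴ * B))
        = (((Real.sqrt a : ℝ) : ℂ) • B)ᴴ * (((Real.sqrt a : ℝ) : ℂ) • B) := by
      rw [conjTranspose_smul, smul_mul_assoc, mul_smul_comm, smul_smul]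
      congr 1
      simp [Complex.star_def, Complex.conj_ofReal, ← Complex.ofReal_mul,
        Real.mul_self_sqrt ha]
    rw [h]
    exact posSemidef_conjTranspose_mul_self _
  -- inner identities
  have inner2 : Mᴴ * (((Δt ^ 2 : ℝ) : ℂ) • H ^ 2) * M - ((2*c*c) * (2*c*c)) • (H * H * (H * H))
      = ((Δt ^ 2 : ℝ) : ℂ) • (Hᴴ * H) := by
    rw [hMH, hMdef, hH.eq]
    simp only [pow_two, sub_mul, mul_sub, mul_add, add_mul, mul_one, one_mul,
      smul_mul_assoc, mul_smul_comm, smul_smul, mul_assoc]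
    match_scalars <;>
      first
        | ring1
        | (simp only [hc]; push_cast; ring1)
        | (simp only [hc]; push_cast; ring_nf; simp [Complex.I_sq]; push_cast; ring1)
        | (simp only [hc]; push_cast; ring_nf; simp [Complex.I_sq])
  have inner4 : Mᴴ * (((Δt ^ 4 : ℝ) : ℂ) • H ^ 4) * M - ((2*c*c) * (2*c*c)) • (H * H * (H * H))
      = ((3 * Δt ^ 4 / 4 : ℝ) : ℂ) • ((H * H)ᴴ * (H * H))
        + ((Δt ^ 6 / 4 : ℝ) : ℂ) • ((H * H * H)ᴴ * (H * H * H)) := by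
    rw [hMH, hMdef]
    rw [show H ^ 4 = H * H * (H * H) by rw [show (4:ℕ) = 2 + 2 from rfl, pow_add, pow_two]]
    rw [conjTranspose_mul, conjTranspose_mul, conjTranspose_mul, hH.eq]
    simp only [sub_mul, mul_sub, mul_add, add_mul, mul_one, one_mul,
      smul_mul_assoc, mul_smul_comm, smul_smul, mul_assoc]
    match_scalars <;>
      first
        | ring1
        | (simp only [hc]; push_cast; ring1)
        | (simp only [hc]; push_cast; ring_nf; simp [Complex.I_sq]; push_cast; ring1)
        | (simp only [hc]; push_cast; ring_nf; simp [Complex.I_sq])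
  -- assemble goal 2
  have h2 : ((Δt ^ 2 : ℝ) : ℂ) • H ^ 2 - Aᴴ * A
      = (M⁻¹)ᴴ * (((Δt ^ 2 : ℝ) : ℂ) • (Hᴴ * H)) * M⁻¹ := by
    conv_lhs => rw [hAA, ← hconj (((Δt ^ 2 : ℝ) : ℂ) • H ^ 2)]
    rw [← inner2]
    simp only [mul_sub, sub_mul, mul_smul_comm, smul_mul_assoc, mul_assoc]
  have h4 : ((Δt ^ 4 : ℝ) : ℂ) • H ^ 4 - Aᴴ * A
      = (M⁻¹)ᴴ * (((3 * Δt ^ 4 / 4 : ℝ) : ℂ) • ((H * H)ᴴ * (H * H))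
        + ((Δt ^ 6 / 4 : ℝ) : ℂ) • ((H * H * H)ᴴ * (H * H * H))) * M⁻¹ := by
    conv_lhs => rw [hAA, ← hconj (((Δt ^ 4 : ℝ) : ℂ) • H ^ 4)]
    rw [← inner4]
    simp only [mul_sub, sub_mul, mul_smul_comm, smul_mul_assoc, mul_assoc]
  refine ⟨hUnit, ?_, ?_⟩
  · rw [h2]
    exact (hps (Δt ^ 2) (sq_nonneg _) H).conjTranspose_mul_mul_same M⁻¹
  · rw [h4]
    refine Matrix.PosSemidef.conjTranspose_mul_mul_same ?_ M⁻¹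
    exact (hps _ (by positivity) (H * H)).add (hps _ (by positivity) (H * H * H))
end

section
/- Interpolation inequality for operators on a scale generated by a positive operator: let Λ be a Hermitian positive definite d×d complex matrix with all eigenvalues ≥ 1 (i.e. Λ ≥ I in the Loewner order), let T be any d×d complex matrix, let n₀ ≥ l ≥ 0 be real numbers and θ ∈ [0,1]. Then, with real powers of Λ defined by functional calculus, ‖Λ^{θ(n₀−l)/2} · T · Λ^{−(θ(n₀−l)+l)/2}‖ ≤ ‖T · Λ^{−l/2}‖^{1−θ} · ‖Λ^{(n₀−l)/2} · T · Λ^{−n₀/2}‖^{θ}. -/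
open Matrix
open scoped ComplexOrder

/-- Real powers of a Hermitian matrix, defined by the functional calculus (diagonalization):
`Λ^s = U diag(λᵢ^s) Uᴴ` where `Λ = U diag(λᵢ) Uᴴ` is the spectral decomposition. -/
noncomputable def herPow {d : ℕ} (Λ : Matrix (Fin d) (Fin d) ℂ) (hΛ : Λ.IsHermitian)
    (s : ℝ) : Matrix (Fin d) (Fin d) ℂ :=
  (hΛ.eigenvectorUnitary : Matrix (Fin d) (Fin d) ℂ) *
    Matrix.diagonal (fun i => ((hΛ.eigenvalues i ^ s : ℝ) : ℂ)) *
    (hΛ.eigenvectorUnitary : Matrix (Fin d) (Fin d) ℂ)ᴴ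


/-! Write `a = (n₀ - l)/2` and `B = T Λ^{-l/2}`; the claim becomes
`‖Λ^{θa} B Λ^{-θa}‖ ≤ ‖B‖^{1-θ} ‖Λ^{a} B Λ^{-a}‖^θ`. The complex powers `z ↦ Λ^{za}` form a
holomorphic one-parameter group that is unitary on the imaginary axis, so
`F z = Λ^{za} B Λ^{-za}` is bounded by `‖B‖` on `Re z = 0` and by `‖F 1‖` on `Re z = 1`;
Hadamard's three lines theorem interpolates at `z = θ`. -/

open Complex HadamardThreeLines

section Interpolation

variable {A : Type*} [NormedRing A] {P : ℂ → A}

theorem norm_le_norm_re_of_add (hadd : ∀ z w, P (z + w) = P z * P w)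
    (hunit : ∀ z : ℂ, z.re = 0 → ‖P z‖ ≤ 1) (z : ℂ) : ‖P z‖ ≤ ‖P z.re‖ :=
  calc ‖P z‖ = ‖P z.re * P (z.im * I)‖ := by rw [← hadd, re_add_im]
    _ ≤ ‖P z.re‖ * ‖P (z.im * I)‖ := norm_mul_le _ _
    _ ≤ ‖P z.re‖ := mul_le_of_le_one_right (norm_nonneg _) (hunit _ (by simp))

theorem norm_conj_le_of_re_eq_zero (hunit : ∀ z : ℂ, z.re = 0 → ‖P z‖ ≤ 1) (X : A) {z : ℂ}
    (hz : z.re = 0) : ‖P z * X * P (-z)‖ ≤ ‖X‖ :=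
  calc ‖P z * X * P (-z)‖ ≤ ‖P z‖ * ‖X‖ * ‖P (-z)‖ := norm_mul₃_le
    _ ≤ 1 * ‖X‖ * 1 := by
      gcongr
      · exact hunit z hz
      · exact hunit (-z) (by simp [hz])
    _ = ‖X‖ := by ring

theorem norm_conj_le_interp [NormedAlgebra ℂ A] (hP : Differentiable ℂ P)
    (hadd : ∀ z w, P (z + w) = P z * P w) (hunit : ∀ z : ℂ, z.re = 0 → ‖P z‖ ≤ 1) (B : A)
    {θ : ℝ} (hθ : θ ∈ Set.Icc 0 1) :
    ‖P θ * B * P (-θ)‖ ≤ ‖B‖ ^ (1 - θ) * ‖P 1 * B * P (-1)‖ ^ θ := by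
  set F : ℂ → A := fun z => P z * B * P (-z)
  have hF : Differentiable ℂ F := (hP.mul_const B).mul (hP.comp differentiable_neg)
  obtain ⟨M, hM⟩ := (isCompact_Icc (a := (-1 : ℝ)) (b := 1)).exists_bound_of_continuousOn
    (hP.continuous.comp continuous_ofReal).continuousOn
  have hPM : ∀ z : ℂ, |z.re| ≤ 1 → ‖P z‖ ≤ M := fun z hz =>
    (norm_le_norm_re_of_add hadd hunit z).trans (hM _ (abs_le.mp hz))
  have hbdd : BddAbove ((norm ∘ F) '' verticalClosedStrip 0 1) := by
    refine ⟨M * ‖B‖ * M, ?_⟩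
    rintro _ ⟨z, ⟨hz0, hz1⟩, rfl⟩
    have hz : |z.re| ≤ 1 := abs_le.mpr ⟨by linarith, hz1⟩
    calc ‖F z‖ ≤ ‖P z‖ * ‖B‖ * ‖P (-z)‖ := norm_mul₃_le
      _ ≤ M * ‖B‖ * M := by
        have hM0 : 0 ≤ M := (norm_nonneg _).trans (hPM z hz)
        gcongr
        · exact hPM z hz
        · exact hPM (-z) (by simpa using hz)
  have hedge1 : ∀ z : ℂ, z.re = 1 → ‖F z‖ ≤ ‖F 1‖ := by
    intro z hz
    have hshift : F z = P (z - 1) * F 1 * P (-(z - 1)) := by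
      have h₁ : P z = P (z - 1) * P 1 := by rw [← hadd, sub_add_cancel]
      have h₂ : P (-z) = P (-1) * P (-(z - 1)) := by rw [← hadd]; ring_nf
      simp only [F, h₁, h₂, mul_assoc]
    rw [hshift]
    exact norm_conj_le_of_re_eq_zero hunit _ (by simp [hz])
  have hθ' : (θ : ℂ) ∈ verticalClosedStrip 0 1 := by simpa [verticalClosedStrip] using hθ
  simpa using norm_le_interp_of_mem_verticalClosedStrip₀₁' F hθ' hF.diffContOnCl hbdd
    (fun z hz => norm_conj_le_of_re_eq_zero hunit B hz) hedge1

end Interpolation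

open scoped Matrix.Norms.L2Operator ComplexConjugate

namespace Matrix.IsHermitian

variable {n : Type*} [Fintype n] [DecidableEq n] {Λ : Matrix n n ℂ}

noncomputable def cpow (hΛ : Λ.IsHermitian) (z : ℂ) : Matrix n n ℂ :=
  Unitary.conjStarAlgAut ℂ _ hΛ.eigenvectorUnitary (diagonal fun i => (hΛ.eigenvalues i : ℂ) ^ z)

theorem cpow_add (hpd : Λ.PosDef) (z w : ℂ) :
    hpd.isHermitian.cpow (z + w) = hpd.isHermitian.cpow z * hpd.isHermitian.cpow w := by
  simp only [cpow, ← map_mul, diagonal_mul_diagonal,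
    Complex.cpow_add _ _ (ofReal_ne_zero.mpr (hpd.eigenvalues_pos _).ne')]

theorem cpow_zero (hΛ : Λ.IsHermitian) : hΛ.cpow 0 = 1 := by
  simp [cpow, diagonal_one]

theorem conjTranspose_cpow (hΛ : Λ.IsHermitian) (hpsd : Λ.PosSemidef) (z : ℂ) :
    (hΛ.cpow z)ᴴ = hΛ.cpow (conj z) := by
  rw [cpow, ← star_eq_conjTranspose, ← map_star, star_eq_conjTranspose, diagonal_conjTranspose]
  congr 2
  ext i
  have harg := arg_ofReal_of_nonneg (hpsd.eigenvalues_nonneg i)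
  simp [Complex.cpow_conj _ _ (by rw [harg]; exact Real.pi_ne_zero.symm)]

theorem norm_cpow_le_one (hpd : Λ.PosDef) {z : ℂ} (hz : z.re = 0) :
    ‖hpd.isHermitian.cpow z‖ ≤ 1 := by
  have hunitary : (hpd.isHermitian.cpow z)ᴴ * hpd.isHermitian.cpow z = 1 := by
    rw [conjTranspose_cpow _ hpd.posSemidef, ← cpow_add hpd, ← cpow_zero hpd.isHermitian]
    congr 1
    exact Complex.ext (by simp [hz]) (by simp)
  have hsq : ‖hpd.isHermitian.cpow z‖ * ‖hpd.isHermitian.cpow z‖ ≤ 1 := by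
    rw [← l2_opNorm_conjTranspose_mul_self, hunitary, ← diagonal_one, l2_opNorm_diagonal]
    exact pi_norm_le_iff_of_nonneg zero_le_one |>.mpr fun _ => norm_one.le
  nlinarith [norm_nonneg (hpd.isHermitian.cpow z)]

theorem differentiable_cpow (hpd : Λ.PosDef) : Differentiable ℂ hpd.isHermitian.cpow := by
  have hdiag : Differentiable ℂ fun z : ℂ =>
      diagonal fun i => (hpd.isHermitian.eigenvalues i : ℂ) ^ z :=
    (LinearMap.toContinuousLinearMap (diagonalLinearMap n ℂ ℂ)).differentiable.comp <|
      differentiable_pi.mpr fun i => (differentiable_id.const_cpow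
        (Or.inl (ofReal_ne_zero.mpr (hpd.eigenvalues_pos i).ne')))
  exact (hdiag.const_mul (hpd.isHermitian.eigenvectorUnitary : Matrix n n ℂ)).mul_const
    (star (hpd.isHermitian.eigenvectorUnitary : Matrix n n ℂ))

end Matrix.IsHermitian

theorem herPow_eq_cpow {d : ℕ} {Λ : Matrix (Fin d) (Fin d) ℂ} (hΛ : Λ.IsHermitian)
    (hpsd : Λ.PosSemidef) (s : ℝ) : herPow Λ hΛ s = hΛ.cpow s := by
  simp only [herPow, Matrix.IsHermitian.cpow, Unitary.conjStarAlgAut_apply,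
    ofReal_cpow (hpsd.eigenvalues_nonneg _)]
  rfl

theorem opNorm_eq_l2_opNorm {d : ℕ} (A : Matrix (Fin d) (Fin d) ℂ) : opNorm A = ‖A‖ := rfl

theorem stmt17_general {d : ℕ}
    (Λ : Matrix (Fin d) (Fin d) ℂ) (hΛ : Λ.IsHermitian) (hpd : Λ.PosDef)
    (T : Matrix (Fin d) (Fin d) ℂ) (n₀ l : ℝ)
    (θ : ℝ) (hθ0 : 0 ≤ θ) (hθ1 : θ ≤ 1) :
    opNorm (herPow Λ hΛ (θ * (n₀ - l) / 2) * T * herPow Λ hΛ (-((θ * (n₀ - l) + l) / 2)))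
      ≤ opNorm (T * herPow Λ hΛ (-(l / 2))) ^ (1 - θ) *
        opNorm (herPow Λ hΛ ((n₀ - l) / 2) * T * herPow Λ hΛ (-(n₀ / 2))) ^ θ := by
  set a : ℂ := (((n₀ - l) / 2 : ℝ) : ℂ)
  have hinterp := norm_conj_le_interp (P := fun z => hΛ.cpow (z * a))
    ((Matrix.IsHermitian.differentiable_cpow hpd).comp (differentiable_id.mul_const a))
    (fun z w => by simp only [add_mul, Matrix.IsHermitian.cpow_add hpd])
    (fun z hz => Matrix.IsHermitian.norm_cpow_le_one hpd (by simp [a, hz]))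
    (T * herPow Λ hΛ (-(l / 2))) ⟨hθ0, hθ1⟩
  simp only [opNorm_eq_l2_opNorm, herPow_eq_cpow hΛ hpd.posSemidef, mul_assoc,
    ← Matrix.IsHermitian.cpow_add hpd] at hinterp ⊢
  convert hinterp using 6 <;> push_cast [a] <;> ring_nf

/-- Interpolation inequality for operators on a scale generated by a positive operator `Λ ≥ I`:
`‖Λ^{θ(n₀−l)/2} T Λ^{−(θ(n₀−l)+l)/2}‖ ≤ ‖T Λ^{−l/2}‖^{1−θ} ‖Λ^{(n₀−l)/2} T Λ^{−n₀/2}‖^{θ}`. -/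
theorem stmt17 {d : ℕ} (hd : 1 ≤ d)
    (Λ : Matrix (Fin d) (Fin d) ℂ) (hΛ : Λ.IsHermitian) (hpd : Λ.PosDef)
    (hge : (Λ - 1).PosSemidef)
    (T : Matrix (Fin d) (Fin d) ℂ) (n₀ l : ℝ) (hl : 0 ≤ l) (hn : l ≤ n₀)
    (θ : ℝ) (hθ0 : 0 ≤ θ) (hθ1 : θ ≤ 1) :
    opNorm (herPow Λ hΛ (θ * (n₀ - l) / 2) * T * herPow Λ hΛ (-((θ * (n₀ - l) + l) / 2)))
      ≤ opNorm (T * herPow Λ hΛ (-(l / 2))) ^ (1 - θ) *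
        opNorm (herPow Λ hΛ ((n₀ - l) / 2) * T * herPow Λ hΛ (-(n₀ / 2))) ^ θ :=
  stmt17_general Λ hΛ hpd T n₀ l θ hθ0 hθ1
end
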